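/- Consider the mass-action system in x = (x1,x2,x3) with f1 = −κ1·x1·x2·x3 + κ2, f2 = −κ1·x1·x2·x3 − κ3·x1·x2 + κ4·x1·x3 − κ5·x2 + κ6·x3 + κ2, f3 = −κ1·x1·x2·x3 + κ3·x1·x2 − κ4·x1·x3 + κ5·x2 − κ6·x3 + κ2, arising from the zero-one network X1+X2+X3 ⇌ 0, X1+X2 ⇌ X1+X3, X2 ⇌ X3 (with rate constants κ1,…,κ6). For every κ ∈ ℝ⁶_{>0} and every c ∈ ℝ, there is exactly one point x ∈ ℝ³_{>0} satisfying x1 = (1/2)·x2 + (1/2)·x3 + c and f(κ,x) = 0; moreover, at this point the Jacobian with respect to (x1,x2,x3) of the map x ↦ (x1 − (1/2)x2 − (1/2)x3 − c, f2(κ,x), f3(κ,x)) is nonsingular. -/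

import Mathlib

/-!
Steady states are the points where the outflow `κ 0 * x 0 * x 1 * x 2` of `X1 + X2 + X3 → 0`
equals the inflow `κ 1` and the exchange `X2 ⇌ X3` (direct and catalysed by `X1`) is balanced:
`(κ 2 * x 0 + κ 4) * x 1 = (κ 3 * x 0 + κ 5) * x 2`. In the class `P_c`, balance together with
`x 1 + x 2 = 2 * (x 0 - c)` determines `x 1` and `x 2` from `a = x 0 > max c 0`, and along this
curve the outflow is `4 κ 0 (a - c)² · AB / (A + B) · a / (A + B)` with `A = κ 3 a + κ 5` and
`B = κ 2 a + κ 4`. The last two factors are nondecreasing and the first is strictly increasing and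
unbounded, so the outflow meets `κ 1` exactly once. The Jacobian determinant of the augmented
system is `κ 0` times a polynomial in `x` with positive coefficients, hence positive on the whole
positive orthant.
-/

noncomputable section

/-- The species-formation rate function of the zero-one network
`X1+X2+X3 ⇌ 0, X1+X2 ⇌ X1+X3, X2 ⇌ X3` with rate constants `κ1,…,κ6`. -/
def f19 (κ : Fin 6 → ℝ) (x : Fin 3 → ℝ) : Fin 3 → ℝ :=
  ![-(κ 0) * x 0 * x 1 * x 2 + κ 1,
    -(κ 0) * x 0 * x 1 * x 2 - κ 2 * x 0 * x 1 + κ 3 * x 0 * x 2 - κ 4 * x 1 + κ 5 * x 2 + κ 1,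
    -(κ 0) * x 0 * x 1 * x 2 + κ 2 * x 0 * x 1 - κ 3 * x 0 * x 2 + κ 4 * x 1 - κ 5 * x 2 + κ 1]

/-- The steady-state system augmented by the conservation law `x1 = (1/2)x2 + (1/2)x3 + c`. -/
def h19 (κ : Fin 6 → ℝ) (c : ℝ) (x : Fin 3 → ℝ) : Fin 3 → ℝ :=
  ![x 0 - (1 / 2) * x 1 - (1 / 2) * x 2 - c, f19 κ x 1, f19 κ x 2]

/-- The Jacobian matrix of `h19` with respect to `x`. -/
def jacH19 (κ : Fin 6 → ℝ) (c : ℝ) (x : Fin 3 → ℝ) : Matrix (Fin 3) (Fin 3) ℝ :=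
  fun i l => deriv (fun t => h19 κ c (Function.update x l t) i) (x l)

open Set Filter

theorem StrictMonoOn.existsUnique_eq_of_tendsto_atTop {α δ : Type*}
    [ConditionallyCompleteLinearOrder α] [TopologicalSpace α] [OrderTopology α] [DenselyOrdered α]
    [LinearOrder δ] [TopologicalSpace δ] [OrderClosedTopology δ] {f : α → δ} {m : α} {y : δ}
    (hmono : StrictMonoOn f (Ici m)) (hcont : ContinuousOn f (Ici m))
    (htop : Tendsto f atTop atTop) (hm : f m < y) : ∃! a, m < a ∧ f a = y := by
  obtain ⟨a, ha, rfl⟩ := intermediate_value_Ici hcont htop hm.le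
  have hma : m < a := ha.lt_of_ne (by rintro rfl; exact hm.false)
  exact ⟨a, ⟨hma, rfl⟩, fun b ⟨hmb, hb⟩ => hmono.injOn hmb.le ha hb⟩

lemma mul_div_add_le_mul_div_add {p q p' q' : ℝ} (hp : 0 < p) (hq : 0 < q) (hpp' : p ≤ p')
    (hqq' : q ≤ q') : p * q / (p + q) ≤ p' * q' / (p' + q') := by
  have hp' := hp.trans_le hpp'
  have hq' := hq.trans_le hqq'
  rw [div_le_div_iff₀ (by positivity) (by positivity)]
  nlinarith [mul_nonneg (mul_pos hp hp').le (sub_nonneg.2 hqq'),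
    mul_nonneg (mul_pos hq hq').le (sub_nonneg.2 hpp')]

lemma div_mul_add_le_div_mul_add {r s a b : ℝ} (hr : 0 ≤ r) (hs : 0 < s) (ha : 0 ≤ a)
    (hab : a ≤ b) : a / (r * a + s) ≤ b / (r * b + s) := by
  have hb := ha.trans hab
  rw [div_le_div_iff₀ (by positivity) (by positivity)]
  nlinarith [mul_le_mul_of_nonneg_right hab hs.le]

lemma f19_eq_zero_iff {κ : Fin 6 → ℝ} {x : Fin 3 → ℝ} :
    (∀ i, f19 κ x i = 0) ↔
      κ 0 * x 0 * x 1 * x 2 = κ 1 ∧ (κ 2 * x 0 + κ 4) * x 1 = (κ 3 * x 0 + κ 5) * x 2 := by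
  constructor
  · intro h
    have h0 := h 0
    have h1 := h 1
    simp only [f19, Matrix.cons_val_zero, Matrix.cons_val_one] at h0 h1
    exact ⟨by linear_combination -h0, by linear_combination h0 - h1⟩
  · rintro ⟨hprod, hbal⟩ i
    fin_cases i <;>
      simp only [f19, Fin.zero_eta, Fin.mk_one, Fin.reduceFinMk, Fin.isValue, Matrix.cons_val_zero,
        Matrix.cons_val_one, Matrix.cons_val]
    · linear_combination -hprod
    · linear_combination -hprod - hbal
    · linear_combination -hprod + hbal

lemma deriv_eq_of_forall_eq_add_mul {f : ℝ → ℝ} {s p : ℝ} (h : ∀ t, f t = f s + p * (t - s)) :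
    deriv f s = p := by
  have : HasDerivAt (fun t => f s + p * (t - s)) p s := by
    simpa using ((hasDerivAt_id s).sub_const s).const_mul p |>.const_add (f s)
  exact (this.congr_of_eventuallyEq (.of_forall h)).deriv

lemma jacH19_eq (κ : Fin 6 → ℝ) (c : ℝ) (x : Fin 3 → ℝ) :
    jacH19 κ c x = !![1, -1/2, -1/2;
      -κ 0 * x 1 * x 2 - κ 2 * x 1 + κ 3 * x 2, -κ 0 * x 0 * x 2 - κ 2 * x 0 - κ 4,
        -κ 0 * x 0 * x 1 + κ 3 * x 0 + κ 5;
      -κ 0 * x 1 * x 2 + κ 2 * x 1 - κ 3 * x 2, -κ 0 * x 0 * x 2 + κ 2 * x 0 + κ 4,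
        -κ 0 * x 0 * x 1 - κ 3 * x 0 - κ 5] := by
  ext i l
  refine deriv_eq_of_forall_eq_add_mul fun t => ?_
  fin_cases i <;> fin_cases l <;>
    simp only [h19, f19, Function.update_self, Function.update_of_ne, ne_eq, Fin.reduceEq,
      Fin.zero_eta, Fin.mk_one, Fin.reduceFinMk, Fin.isValue, not_false_eq_true, zero_ne_one,
      one_ne_zero, Matrix.of_apply, Matrix.cons_val', Matrix.cons_val_zero, Matrix.cons_val_one,
      Matrix.cons_val, Matrix.cons_val_fin_one] <;>
    ring

lemma det_jacH19 (κ : Fin 6 → ℝ) (c : ℝ) (x : Fin 3 → ℝ) :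
    (jacH19 κ c x).det = κ 0 * (2 * x 0 * ((κ 2 * x 0 + κ 4) * x 1 + (κ 3 * x 0 + κ 5) * x 2)
      + (κ 4 + κ 5) * x 1 * x 2 + κ 2 * x 0 * x 1 ^ 2 + κ 3 * x 0 * x 2 ^ 2) := by
  rw [jacH19_eq, Matrix.det_fin_three]
  simp only [Matrix.of_apply, Matrix.cons_val', Matrix.cons_val_zero, Matrix.cons_val_one,
    Matrix.cons_val, Matrix.cons_val_fin_one]
  ring

lemma det_jacH19_pos {κ : Fin 6 → ℝ} (hκ : ∀ j, 0 < κ j) (c : ℝ) {x : Fin 3 → ℝ}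
    (hx : ∀ i, 0 < x i) : 0 < (jacH19 κ c x).det := by
  have := hκ 0; have := hκ 2; have := hκ 3; have := hκ 4; have := hκ 5
  have := hx 0; have := hx 1; have := hx 2
  rw [det_jacH19]
  positivity

/-- The point of `P_c` with first coordinate `a` at which the exchange reactions
`X1 + X2 ⇌ X1 + X3` and `X2 ⇌ X3` are balanced. -/
def balancedPoint (κ : Fin 6 → ℝ) (c a : ℝ) : Fin 3 → ℝ :=
  ![a, 2 * (a - c) * (κ 3 * a + κ 5) / ((κ 3 * a + κ 5) + (κ 2 * a + κ 4)),
    2 * (a - c) * (κ 2 * a + κ 4) / ((κ 3 * a + κ 5) + (κ 2 * a + κ 4))]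

section balancedPoint

variable {κ : Fin 6 → ℝ} {c a : ℝ}

lemma eq_balancedPoint (hκ : ∀ j, 0 < κ j) {y : Fin 3 → ℝ} (hy : 0 ≤ y 0)
    (hclass : y 0 = (1 / 2) * y 1 + (1 / 2) * y 2 + c)
    (hbal : (κ 2 * y 0 + κ 4) * y 1 = (κ 3 * y 0 + κ 5) * y 2) :
    y = balancedPoint κ c (y 0) := by
  have := hκ 2; have := hκ 3; have := hκ 4; have := hκ 5
  have hden : 0 < (κ 3 * y 0 + κ 5) + (κ 2 * y 0 + κ 4) := by positivity
  funext i
  fin_cases i <;>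
    simp only [balancedPoint, Fin.zero_eta, Fin.mk_one, Fin.reduceFinMk, Fin.isValue,
      Matrix.cons_val_zero, Matrix.cons_val_one, Matrix.cons_val] <;>
    field_simp
  · linear_combination hbal - 2 * (κ 3 * y 0 + κ 5) * hclass
  · linear_combination -hbal - 2 * (κ 2 * y 0 + κ 4) * hclass

lemma balancedPoint_pos (hκ : ∀ j, 0 < κ j) (ha : max c 0 < a) (i : Fin 3) :
    0 < balancedPoint κ c a i := by
  obtain ⟨hca, ha⟩ := max_lt_iff.1 ha
  have := hκ 2; have := hκ 3; have := hκ 4; have := hκ 5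
  have := sub_pos.2 hca
  fin_cases i <;>
    simp only [balancedPoint, Fin.zero_eta, Fin.mk_one, Fin.reduceFinMk, Fin.isValue,
      Matrix.cons_val_zero, Matrix.cons_val_one, Matrix.cons_val] <;>
    positivity

lemma balancedPoint_mem_class (hκ : ∀ j, 0 < κ j) (ha : 0 ≤ a) :
    balancedPoint κ c a 0 =
      (1 / 2) * balancedPoint κ c a 1 + (1 / 2) * balancedPoint κ c a 2 + c := by
  have := hκ 2; have := hκ 3; have := hκ 4; have := hκ 5
  have hden : 0 < (κ 3 * a + κ 5) + (κ 2 * a + κ 4) := by positivity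
  simp only [balancedPoint, Matrix.cons_val_zero, Matrix.cons_val_one, Matrix.cons_val]
  field_simp
  ring

lemma balancedPoint_balanced :
    (κ 2 * a + κ 4) * balancedPoint κ c a 1 = (κ 3 * a + κ 5) * balancedPoint κ c a 2 := by
  simp only [balancedPoint, Matrix.cons_val_one, Matrix.cons_val]
  ring

end balancedPoint

def degradationRate (κ : Fin 6 → ℝ) (c a : ℝ) : ℝ :=
  κ 0 * a * balancedPoint κ c a 1 * balancedPoint κ c a 2

def degradationRateFactor (κ : Fin 6 → ℝ) (a : ℝ) : ℝ :=
  (κ 3 * a + κ 5) * (κ 2 * a + κ 4) / ((κ 3 * a + κ 5) + (κ 2 * a + κ 4)) *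
    (a / ((κ 2 + κ 3) * a + (κ 4 + κ 5)))

section degradationRate

variable {κ : Fin 6 → ℝ} {c : ℝ}

lemma degradationRate_eq (hκ : ∀ j, 0 < κ j) {a : ℝ} (ha : 0 ≤ a) :
    degradationRate κ c a = 4 * κ 0 * (a - c) ^ 2 * degradationRateFactor κ a := by
  have := hκ 2; have := hκ 3; have := hκ 4; have := hκ 5
  have hden : 0 < (κ 3 * a + κ 5) + (κ 2 * a + κ 4) := by positivity
  have hden' : 0 < (κ 2 + κ 3) * a + (κ 4 + κ 5) := by positivity
  simp only [degradationRate, degradationRateFactor, balancedPoint, Matrix.cons_val_zero,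
    Matrix.cons_val_one, Matrix.cons_val]
  field_simp
  ring

lemma degradationRateFactor_pos (hκ : ∀ j, 0 < κ j) {a : ℝ} (ha : 0 < a) :
    0 < degradationRateFactor κ a := by
  have := hκ 2; have := hκ 3; have := hκ 4; have := hκ 5
  unfold degradationRateFactor
  positivity

lemma monotoneOn_degradationRateFactor (hκ : ∀ j, 0 < κ j) :
    MonotoneOn (degradationRateFactor κ) (Ici 0) := by
  intro a (ha : 0 ≤ a) b (hb : 0 ≤ b) hab
  have := hκ 2; have := hκ 3; have := hκ 4; have := hκ 5
  unfold degradationRateFactor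
  gcongr ?_ * ?_
  · exact mul_div_add_le_mul_div_add (by positivity) (by positivity) (by gcongr) (by gcongr)
  · exact div_mul_add_le_div_mul_add (by positivity) (by positivity) ha hab

lemma continuousOn_degradationRate (hκ : ∀ j, 0 < κ j) :
    ContinuousOn (degradationRate κ c) (Ici 0) := by
  have := hκ 2; have := hκ 3; have := hκ 4; have := hκ 5
  refine ContinuousOn.congr ?_ fun a ha => degradationRate_eq hκ ha
  unfold degradationRateFactor
  fun_prop (disch := intro a (ha : 0 ≤ a); positivity)

lemma strictMonoOn_degradationRate (hκ : ∀ j, 0 < κ j) :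
    StrictMonoOn (degradationRate κ c) (Ici (max c 0)) := by
  intro a ha b hb hab
  have hca : c ≤ a := le_of_max_le_left ha
  have ha0 : 0 ≤ a := le_of_max_le_right ha
  have hb0 : 0 < b := ha0.trans_lt hab
  have hfac := monotoneOn_degradationRateFactor hκ ha0 hb0.le hab.le
  have := hκ 0
  have := degradationRateFactor_pos hκ hb0
  rw [degradationRate_eq hκ ha0, degradationRate_eq hκ hb0.le]
  calc 4 * κ 0 * (a - c) ^ 2 * degradationRateFactor κ a
      ≤ 4 * κ 0 * (a - c) ^ 2 * degradationRateFactor κ b := by gcongr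
    _ < 4 * κ 0 * (b - c) ^ 2 * degradationRateFactor κ b := by gcongr

lemma tendsto_degradationRate_atTop (hκ : ∀ j, 0 < κ j) :
    Tendsto (degradationRate κ c) atTop atTop := by
  have := hκ 0
  have hpos := degradationRateFactor_pos hκ zero_lt_one
  have hsq : Tendsto (fun a => 4 * κ 0 * (a - c) ^ 2 * degradationRateFactor κ 1) atTop atTop :=
    ((tendsto_pow_atTop two_ne_zero).comp (tendsto_atTop_add_const_right _ (-c) tendsto_id)
      |>.const_mul_atTop (by positivity)).atTop_mul_const hpos
  refine tendsto_atTop_mono' _ ?_ hsq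
  filter_upwards [eventually_ge_atTop 1] with a ha
  rw [degradationRate_eq hκ (zero_le_one.trans ha)]
  gcongr
  exact monotoneOn_degradationRateFactor hκ (mem_Ici.2 zero_le_one)
    (mem_Ici.2 (zero_le_one.trans ha)) ha

lemma degradationRate_max_zero : degradationRate κ c (max c 0) = 0 := by
  rcases le_total c 0 with h | h
  · simp [degradationRate, max_eq_right h]
  · simp [degradationRate, balancedPoint, max_eq_left h]

end degradationRate

/-- For every positive rate-constant vector and every `c`, the network has exactly one positive
steady state in the class `{x > 0 : x1 = (1/2)x2 + (1/2)x3 + c}`, and at this steady state the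
Jacobian of the augmented system is nonsingular. -/
theorem stmt19 (κ : Fin 6 → ℝ) (hκ : ∀ j, 0 < κ j) (c : ℝ) :
    ∃ x : Fin 3 → ℝ,
      ((∀ i, 0 < x i) ∧ x 0 = (1 / 2) * x 1 + (1 / 2) * x 2 + c ∧
        (∀ i, f19 κ x i = 0)) ∧
      (jacH19 κ c x).det ≠ 0 ∧
      (∀ y : Fin 3 → ℝ,
        ((∀ i, 0 < y i) ∧ y 0 = (1 / 2) * y 1 + (1 / 2) * y 2 + c ∧
          (∀ i, f19 κ y i = 0)) → y = x) := by
  obtain ⟨a, ⟨ha, hrate⟩, hunique⟩ :=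
    (strictMonoOn_degradationRate (c := c) hκ).existsUnique_eq_of_tendsto_atTop
      ((continuousOn_degradationRate hκ).mono (Ici_subset_Ici.2 (le_max_right c 0)))
      (tendsto_degradationRate_atTop hκ)
      (degradationRate_max_zero ▸ hκ 1)
  have hx := balancedPoint_pos hκ ha
  refine ⟨balancedPoint κ c a,
    ⟨hx, balancedPoint_mem_class hκ ((le_max_right c 0).trans ha.le),
      f19_eq_zero_iff.2 ⟨hrate, balancedPoint_balanced⟩⟩, (det_jacH19_pos hκ c hx).ne', ?_⟩
  rintro y ⟨hy, hclass, hf⟩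
  obtain ⟨hprod, hbal⟩ := f19_eq_zero_iff.1 hf
  have hy_eq := eq_balancedPoint hκ (hy 0).le hclass hbal
  have hcy : c < y 0 := by linarith [hy 1, hy 2]
  have hya : y 0 = a := hunique (y 0) ⟨max_lt hcy (hy 0), by rwa [degradationRate, ← hy_eq]⟩
  rw [hy_eq, hya]
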